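/- An almost symmetric reflexive n-cycle (n ≥ 3) fails the path condition. Concretely, with P = (*)^{n-1}, Q = (*)^{n-3}- and R = (*)^{n-3}+: any word W over {+,-,*} satisfying W ≥ Q and W ≥ R also satisfies W ≥ P. -/
import Mathlib


inductive Symb : Type
  | plus | minus | star
deriving DecidableEq


/-- the dual of a symbol: `+` ↦ `-`, `-` ↦ `+`, `*` ↦ `*` -/
def dualSym : Symb → Symb
  | Symb.plus => Symb.minus
  | Symb.minus => Symb.plus
  | Symb.star => Symb.star

/-- the dual (involution) of a word: reverse and dualize each symbol -/
def dualWord (W : List Symb) : List Symb := (W.map dualSym).reverse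

/-- the arc relation of the reflexive path `P(W)` on vertices `{0,…,|W|}` -/
def pathArc (W : List Symb) (i j : ℕ) : Prop :=
  i ≤ W.length ∧ j ≤ W.length ∧
    (i = j ∨ (j = i + 1 ∧ (W[i]? = some Symb.plus ∨ W[i]? = some Symb.star))
           ∨ (i = j + 1 ∧ (W[j]? = some Symb.minus ∨ W[j]? = some Symb.star)))

/-- `f` is an end-point preserving homomorphism from the path `P(V)` onto the path `P(U)` -/
def EPHom (V U : List Symb) (f : ℕ → ℕ) : Prop :=
  f 0 = 0 ∧ f V.length = U.length ∧
  (∀ i j, pathArc V i j → pathArc U (f i) (f j)) ∧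
  (∀ m, m ≤ U.length → ∃ i, i ≤ V.length ∧ f i = m)

/-- the order on words: `U ≤ V` iff there is an end-point preserving
homomorphism from `P(V)` onto `P(U)` -/
def wle (U V : List Symb) : Prop := ∃ f, EPHom V U f

lemma getRep {α : Type} (k i : ℕ) (s t : α) :
    (List.replicate k s ++ [t])[i]? = if i < k then some s else if i = k then some t else none := by
  rcases lt_trichotomy i k with h | h | h
  · rw [List.getElem?_append_left (by simpa using h)]
    simp [List.getElem?_replicate, h]
  · subst h
    rw [List.getElem?_append_right (by simp)]
    simp
  · rw [List.getElem?_eq_none (by simp; omega)]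
    have h1 : ¬ i < k := by omega
    have h2 : i ≠ k := by omega
    simp [h1, h2]

lemma arcQ {k a a' : ℕ} (h : pathArc (List.replicate k Symb.star ++ [Symb.minus]) a a') :
    a ≤ k + 1 ∧ a' ≤ k + 1 ∧ (a = a' ∨ (a' = a + 1 ∧ a < k) ∨ a = a' + 1) := by
  obtain ⟨h1, h2, h3⟩ := h
  simp only [List.length_append, List.length_replicate, List.length_cons, List.length_nil] at h1 h2
  refine ⟨by omega, by omega, ?_⟩
  rcases h3 with h | ⟨he, hs⟩ | ⟨he, hs⟩
  · exact Or.inl h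
  · rw [getRep] at hs
    split_ifs at hs with hc hc
    · exact Or.inr (Or.inl ⟨he, hc⟩)
    · rcases hs with hs | hs <;> exact absurd (Option.some.inj hs) (by simp)
    · rcases hs with hs | hs <;> simp at hs
  · exact Or.inr (Or.inr he)

lemma arcR {k a a' : ℕ} (h : pathArc (List.replicate k Symb.star ++ [Symb.plus]) a a') :
    a ≤ k + 1 ∧ a' ≤ k + 1 ∧ (a = a' ∨ a' = a + 1 ∨ (a = a' + 1 ∧ a' < k)) := by
  obtain ⟨h1, h2, h3⟩ := h
  simp only [List.length_append, List.length_replicate, List.length_cons, List.length_nil] at h1 h2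
  refine ⟨by omega, by omega, ?_⟩
  rcases h3 with h | ⟨he, hs⟩ | ⟨he, hs⟩
  · exact Or.inl h
  · exact Or.inr (Or.inl he)
  · rw [getRep] at hs
    split_ifs at hs with hc hc
    · exact Or.inr (Or.inr ⟨he, hc⟩)
    · rcases hs with hs | hs <;> exact absurd (Option.some.inj hs) (by simp)
    · rcases hs with hs | hs <;> simp at hs

lemma arcP {k a b : ℕ} (ha : a ≤ k + 2) (hb : b ≤ k + 2) (hd : a = b ∨ b = a + 1 ∨ a = b + 1) :
    pathArc (List.replicate (k + 2) Symb.star) a b := by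
  refine ⟨by simpa using ha, by simpa using hb, ?_⟩
  rcases hd with h | h | h
  · exact Or.inl h
  · refine Or.inr (Or.inl ⟨h, Or.inr ?_⟩)
    rw [List.getElem?_replicate]
    simp only [if_pos (by omega : a < k + 2)]
  · refine Or.inr (Or.inr ⟨h, Or.inr ?_⟩)
    rw [List.getElem?_replicate]
    simp only [if_pos (by omega : b < k + 2)]

/-- the corner-adjusted max -/
def phi (k a b : ℕ) : ℕ := if a = k + 1 ∧ b = k + 1 then k + 2 else max a b

lemma phi_step {k a a' b b' : ℕ}
    (hq : a ≤ k + 1 ∧ a' ≤ k + 1 ∧ (a = a' ∨ (a' = a + 1 ∧ a < k) ∨ a = a' + 1))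
    (hr : b ≤ k + 1 ∧ b' ≤ k + 1 ∧ (b = b' ∨ b' = b + 1 ∨ (b = b' + 1 ∧ b' < k))) :
    phi k a b ≤ k + 2 ∧ phi k a' b' ≤ k + 2 ∧
      phi k a' b' ≤ phi k a b + 1 ∧ phi k a b ≤ phi k a' b' + 1 := by
  unfold phi
  split_ifs <;> omega

lemma ivt (h : ℕ → ℕ) (L : ℕ) (step : ∀ i, i < L → h (i + 1) ≤ h i + 1)
    (m : ℕ) (h0 : h 0 ≤ m) (hL : m ≤ h L) : ∃ i, i ≤ L ∧ h i = m := by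
  induction L with
  | zero => exact ⟨0, le_rfl, by omega⟩
  | succ L ih =>
    by_cases hm : m ≤ h L
    · obtain ⟨i, hi, he⟩ := ih (fun i hi => step i (by omega)) hm
      exact ⟨i, by omega, he⟩
    · have := step L (by omega)
      exact ⟨L + 1, le_rfl, by omega⟩

/-- Any word `W` with `W ≥ (*)^{n-3}-` and `W ≥ (*)^{n-3}+` also satisfies
`W ≥ (*)^{n-1}`; hence an almost symmetric `n`-cycle fails the path condition. -/
theorem stmt_18 (n : ℕ) (hn : 3 ≤ n) (W : List Symb)
    (hQ : wle (List.replicate (n - 3) Symb.star ++ [Symb.minus]) W)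
    (hR : wle (List.replicate (n - 3) Symb.star ++ [Symb.plus]) W) :
    wle (List.replicate (n - 1) Symb.star) W := by
  obtain ⟨k, rfl⟩ : ∃ k, n = k + 3 := ⟨n - 3, by omega⟩
  have e3 : k + 3 - 3 = k := by omega
  have e1 : k + 3 - 1 = k + 2 := by omega
  rw [e3] at hQ hR
  rw [e1]
  obtain ⟨f, hf0, hfL, hfarc, -⟩ := hQ
  obtain ⟨g, hg0, hgL, hgarc, -⟩ := hR
  simp only [List.length_append, List.length_replicate, List.length_cons, List.length_nil] at hfL hgL
  set L := W.length with hLdef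
  refine ⟨fun i => phi k (f i) (g i), ?_, ?_, ?_, ?_⟩
  · simp [phi, hf0, hg0]
  · simp only [List.length_replicate]
    rw [show f L = k + 1 by omega, show g L = k + 1 by omega]
    simp [phi]
  · intro i j hij
    have h1 := phi_step (arcQ (hfarc i j hij)) (arcR (hgarc i j hij))
    show pathArc _ (phi k (f i) (g i)) (phi k (f j) (g j))
    exact arcP h1.1 h1.2.1 (by omega)
  · intro m hm
    simp only [List.length_replicate] at hm
    apply ivt
    · intro i hi
      have hw : ∃ s, W[i]? = some s := ⟨W[i], List.getElem?_eq_getElem hi⟩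
      obtain ⟨s, hs⟩ := hw
      have harc : pathArc W i (i + 1) ∨ pathArc W (i + 1) i := by
        cases s with
        | plus => exact Or.inl ⟨by omega, by omega, Or.inr (Or.inl ⟨rfl, Or.inl hs⟩)⟩
        | minus => exact Or.inr ⟨by omega, by omega, Or.inr (Or.inr ⟨rfl, Or.inl hs⟩)⟩
        | star => exact Or.inl ⟨by omega, by omega, Or.inr (Or.inl ⟨rfl, Or.inr hs⟩)⟩
      show phi k (f (i + 1)) (g (i + 1)) ≤ phi k (f i) (g i) + 1
      rcases harc with harc | harc
      · have h1 := phi_step (arcQ (hfarc _ _ harc)) (arcR (hgarc _ _ harc))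
        omega
      · have h1 := phi_step (arcQ (hfarc _ _ harc)) (arcR (hgarc _ _ harc))
        omega
    · show phi k (f 0) (g 0) ≤ m
      simp [phi, hf0, hg0]
    · show m ≤ phi k (f L) (g L)
      rw [show f L = k + 1 by omega, show g L = k + 1 by omega]
      have : phi k (k + 1) (k + 1) = k + 2 := by simp [phi]
      omega
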